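/- arXiv:2304.06362 — 3 statements merged into one kernel-verified Lean document; each statement's English description precedes it below -/
import Mathlib

section
/- Let ν>0 and p∈[1,∞]. There is a constant C depending only on ν such that for every measurable S:( 0,∞)×ℝ³→ℂ, the function w(t,ξ)=∫₀^t e^{-ν|ξ|²(t-s)}S(s,ξ)ds satisfies ‖ ξ ↦ sup_{t≥0}|w(t,ξ)| ‖_{L^p(ℝ³)} + ‖ ξ ↦ (∫₀^∞ |ξ|²|w(t,ξ)|² dt)^{1/2} ‖_{L^p(ℝ³)} ≤ C · ‖ ξ ↦ (∫₀^∞ |ξ|^{-2}|S(t,ξ)|² dt)^{1/2} ‖_{L^p(ℝ³)}, both sides being elements of [0,∞]. -/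
open MeasureTheory ENNReal NNReal

/-- The `L^p` norm (with values in `[0,∞]`) of a nonnegative extended-real-valued
function on `ℝ³`; for `p = ∞` it is the essential supremum. -/
noncomputable def LpXiNorm (p : ℝ≥0∞) (F : EuclideanSpace ℝ (Fin 3) → ℝ≥0∞) : ℝ≥0∞ :=
  if p = ∞ then essSup F volume
  else (∫⁻ ξ, F ξ ^ p.toReal) ^ (1 / p.toReal)

/-- Fourier-side Duhamel integral of the heat semigroup against a source `S`:
`w(t,ξ) = ∫₀^t e^{-ν|ξ|²(t-s)} S(s,ξ) ds`. -/
noncomputable def duhamelHeatW (ν : ℝ) (S : ℝ → EuclideanSpace ℝ (Fin 3) → ℂ) (t : ℝ)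
    (ξ : EuclideanSpace ℝ (Fin 3)) : ℂ :=
  ∫ s in (0 : ℝ)..t, (Real.exp (-(ν * ‖ξ‖ ^ 2 * (t - s))) : ℂ) * S s ξ

section Aux

open Set Real

lemma lint_exp_Ioi0 (a : ℝ) (ha : 0 < a) :
    ∫⁻ u in Set.Ioi (0:ℝ), ENNReal.ofReal (Real.exp (-(a*u))) = ENNReal.ofReal a⁻¹ := by
  rw [← ofReal_integral_eq_lintegral_ofReal]
  · congr 1
    have h := integral_comp_mul_left_Ioi (fun x => Real.exp (-x)) 0 ha
    simp only [mul_zero, smul_eq_mul] at h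
    rw [h, integral_exp_neg_Ioi_zero, mul_one]
  · simpa [neg_mul, IntegrableOn] using exp_neg_integrableOn_Ioi 0 ha
  · exact Filter.Eventually.of_forall fun x => (Real.exp_pos _).le

lemma lint_exp_Ioi (a : ℝ) (ha : 0 < a) (s : ℝ) :
    ∫⁻ t in Set.Ioi s, ENNReal.ofReal (Real.exp (-(a*(t - s)))) = ENNReal.ofReal a⁻¹ := by
  have h := (measurePreserving_sub_right (volume : Measure ℝ) s).setLIntegral_comp_preimage_emb
    (MeasurableEquiv.subRight s).measurableEmbedding
    (fun u => ENNReal.ofReal (Real.exp (-(a*u)))) (Set.Ioi 0)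
  have hpre : (· - s) ⁻¹' (Set.Ioi (0:ℝ)) = Set.Ioi s := by
    ext x; simp [sub_pos]
  rw [hpre] at h
  rw [h, lint_exp_Ioi0 a ha]

lemma lint_exp_Iio (a : ℝ) (ha : 0 < a) (t : ℝ) :
    ∫⁻ s in Set.Iio t, ENNReal.ofReal (Real.exp (-(a*(t - s)))) = ENNReal.ofReal a⁻¹ := by
  have h := (Measure.measurePreserving_sub_left (volume : Measure ℝ) t).setLIntegral_comp_preimage_emb
    (MeasurableEquiv.subLeft t).measurableEmbedding
    (fun u => ENNReal.ofReal (Real.exp (-(a*u)))) (Set.Ioi 0)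
  have hpre : (t - ·) ⁻¹' (Set.Ioi (0:ℝ)) = Set.Iio t := by
    ext x; simp [sub_pos]
  rw [hpre] at h
  rw [h, lint_exp_Ioi0 a ha]

lemma lint_exp_Iic (a : ℝ) (ha : 0 < a) (t : ℝ) :
    ∫⁻ s in Set.Iic t, ENNReal.ofReal (Real.exp (-(a*(t - s)))) = ENNReal.ofReal a⁻¹ := by
  rw [← Measure.restrict_congr_set Iio_ae_eq_Iic, lint_exp_Iio a ha]

lemma lint_exp_Ici (a : ℝ) (ha : 0 < a) (s : ℝ) :
    ∫⁻ t in Set.Ici s, ENNReal.ofReal (Real.exp (-(a*(t - s)))) = ENNReal.ofReal a⁻¹ := by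
  rw [← Measure.restrict_congr_set Ioi_ae_eq_Ici, lint_exp_Ioi a ha]

/-- Cauchy–Schwarz for lower integrals. -/
lemma lintegral_CS {α : Type*} [MeasurableSpace α] (μ : Measure α) {f g : α → ℝ≥0∞}
    (hf : AEMeasurable f μ) (hg : AEMeasurable g μ) :
    ∫⁻ x, f x * g x ∂μ
      ≤ (∫⁻ x, f x ^ (2:ℝ) ∂μ) ^ (1/2:ℝ) * (∫⁻ x, g x ^ (2:ℝ) ∂μ) ^ (1/2:ℝ) := by
  have hconj : Real.HolderConjugate 2 2 := ⟨by norm_num, by norm_num, by norm_num⟩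
  exact ENNReal.lintegral_mul_le_Lp_mul_Lq μ hconj hf hg

lemma pow2_rpow (x : ℝ≥0∞) : x ^ (2:ℝ) = x ^ 2 := by
  rw [show (2:ℝ) = ((2:ℕ):ℝ) by norm_num, ENNReal.rpow_natCast]

lemma stepW (ν : ℝ) (S : ℝ → EuclideanSpace ℝ (Fin 3) → ℂ) (t : ℝ) (ht : 0 < t)
    (ξ : EuclideanSpace ℝ (Fin 3)) :
    (‖duhamelHeatW ν S t ξ‖₊ : ℝ≥0∞)
      ≤ ∫⁻ s in Set.Ioc 0 t,
          ENNReal.ofReal (Real.exp (-(ν * ‖ξ‖ ^ 2 * (t - s)))) * (‖S s ξ‖₊ : ℝ≥0∞) := by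
  rw [duhamelHeatW, intervalIntegral.integral_of_le ht.le]
  refine le_trans (enorm_integral_le_lintegral_enorm _) (le_of_eq ?_)
  refine lintegral_congr fun s => ?_
  show ((‖(Real.exp (-(ν * ‖ξ‖ ^ 2 * (t - s))) : ℂ) * S s ξ‖₊ : ℝ≥0∞)) = _
  rw [nnnorm_mul, ENNReal.coe_mul, Complex.nnnorm_real,
    ← Real.enorm_eq_ofReal (Real.exp_pos _).le]
  rfl

end Aux

section Norms

lemma LpXiNorm_mono (p : ℝ≥0∞) {F G : EuclideanSpace ℝ (Fin 3) → ℝ≥0∞}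
    (h : ∀ᵐ ξ, F ξ ≤ G ξ) : LpXiNorm p F ≤ LpXiNorm p G := by
  unfold LpXiNorm
  split_ifs
  · exact essSup_mono_ae h
  · refine ENNReal.rpow_le_rpow (lintegral_mono_ae (h.mono fun ξ hξ => ?_)) (by positivity)
    exact ENNReal.rpow_le_rpow hξ ENNReal.toReal_nonneg

lemma LpXiNorm_const_mul (p : ℝ≥0∞) (hp : 1 ≤ p) (c : ℝ≥0∞) (hc : c ≠ ∞)
    (G : EuclideanSpace ℝ (Fin 3) → ℝ≥0∞) :
    LpXiNorm p (fun ξ => c * G ξ) ≤ c * LpXiNorm p G := by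
  unfold LpXiNorm
  split_ifs with h
  · exact le_of_eq ENNReal.essSup_const_mul
  · have hq : 0 < p.toReal := ENNReal.toReal_pos (zero_lt_one.trans_le hp).ne' h
    calc (∫⁻ ξ, (c * G ξ) ^ p.toReal) ^ (1/p.toReal)
        = (∫⁻ ξ, c ^ p.toReal * G ξ ^ p.toReal) ^ (1/p.toReal) := by
          simp_rw [ENNReal.mul_rpow_of_nonneg _ _ hq.le]
      _ = (c ^ p.toReal * ∫⁻ ξ, G ξ ^ p.toReal) ^ (1/p.toReal) := by
          rw [lintegral_const_mul' _ _ (ENNReal.rpow_ne_top_of_nonneg hq.le hc)]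
      _ = c * (∫⁻ ξ, G ξ ^ p.toReal) ^ (1/p.toReal) := by
          rw [ENNReal.mul_rpow_of_nonneg _ _ (by positivity), ← ENNReal.rpow_mul,
            mul_one_div, div_self hq.ne', ENNReal.rpow_one]
      _ ≤ c * (∫⁻ ξ, G ξ ^ p.toReal) ^ (1/p.toReal) := le_rfl

end Norms

section Pointwise

open Set Real

variable {ν : ℝ} {S : ℝ → EuclideanSpace ℝ (Fin 3) → ℂ} {ξ : EuclideanSpace ℝ (Fin 3)}

lemma point_sup (hν : 0 < ν) (hS : Measurable (Function.uncurry S)) (hξ : ξ ≠ 0) :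
    essSup (fun t => (‖duhamelHeatW ν S t ξ‖₊ : ℝ≥0∞)) (volume.restrict (Set.Ioi 0))
      ≤ ENNReal.ofReal (((2*ν)⁻¹) ^ (1/2:ℝ)) *
        (∫⁻ τ in Set.Ioi (0:ℝ),
          ((‖ξ‖₊ : ℝ≥0∞) ^ 2)⁻¹ * (‖S τ ξ‖₊ : ℝ≥0∞) ^ 2) ^ (1/2:ℝ) := by
  have hr : (0:ℝ) < ‖ξ‖ := norm_pos_iff.2 hξ
  set r : ℝ := ‖ξ‖ with hrdef
  set rE : ℝ≥0∞ := (‖ξ‖₊ : ℝ≥0∞) with hrEdef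
  have hrE : rE = ENNReal.ofReal r := (ofReal_norm ξ).symm
  have hrE0 : rE ≠ 0 := by simp [hrEdef, hξ]
  have hrET : rE ≠ ⊤ := ENNReal.coe_ne_top
  refine essSup_le_of_ae_le _ ((ae_restrict_mem measurableSet_Ioi).mono fun t ht => ?_)
  have hFm : Measurable fun s => (‖S s ξ‖₊ : ℝ≥0∞) :=
    (hS.comp (measurable_id.prodMk measurable_const)).enorm
  have hkm : Measurable fun s => ENNReal.ofReal (Real.exp (-(ν * r ^ 2 * (t - s)))) := by
    fun_prop
  calc (‖duhamelHeatW ν S t ξ‖₊ : ℝ≥0∞)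
      ≤ ∫⁻ s in Set.Ioc 0 t,
          ENNReal.ofReal (Real.exp (-(ν * r ^ 2 * (t - s)))) * (‖S s ξ‖₊ : ℝ≥0∞) :=
        stepW ν S t ht ξ
    _ = ∫⁻ s in Set.Ioc 0 t,
          (ENNReal.ofReal (Real.exp (-(ν * r ^ 2 * (t - s)))) * rE) *
            (rE⁻¹ * (‖S s ξ‖₊ : ℝ≥0∞)) := by
        refine lintegral_congr fun s => ?_
        rw [mul_assoc (ENNReal.ofReal (Real.exp (-(ν * r ^ 2 * (t - s))))) rE, ← mul_assoc rE,
          ENNReal.mul_inv_cancel hrE0 hrET, one_mul]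
    _ ≤ (∫⁻ s in Set.Ioc 0 t,
            (ENNReal.ofReal (Real.exp (-(ν * r ^ 2 * (t - s)))) * rE) ^ (2:ℝ)) ^ (1/2:ℝ) *
          (∫⁻ s in Set.Ioc 0 t, (rE⁻¹ * (‖S s ξ‖₊ : ℝ≥0∞)) ^ (2:ℝ)) ^ (1/2:ℝ) :=
        lintegral_CS _ ((hkm.mul_const _).aemeasurable)
          ((hFm.const_mul _).aemeasurable)
    _ ≤ (ENNReal.ofReal ((2*ν)⁻¹)) ^ (1/2:ℝ) *
          (∫⁻ τ in Set.Ioi (0:ℝ),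
            ((‖ξ‖₊ : ℝ≥0∞) ^ 2)⁻¹ * (‖S τ ξ‖₊ : ℝ≥0∞) ^ 2) ^ (1/2:ℝ) := by
        refine mul_le_mul' (ENNReal.rpow_le_rpow ?_ (by norm_num))
          (ENNReal.rpow_le_rpow ?_ (by norm_num))
        · -- first factor
          have hpt : ∀ s : ℝ,
              (ENNReal.ofReal (Real.exp (-(ν * r ^ 2 * (t - s)))) * rE) ^ (2:ℝ)
                = ENNReal.ofReal (Real.exp (-((2*(ν * r ^ 2))*(t - s)))) *
                    ENNReal.ofReal (r ^ 2) := by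
            intro s
            rw [ENNReal.mul_rpow_of_nonneg _ _ (by norm_num), hrE,
              ENNReal.ofReal_rpow_of_pos (Real.exp_pos _), ENNReal.ofReal_rpow_of_pos hr]
            congr 2
            · rw [show (2:ℝ) = ((2:ℕ):ℝ) by norm_num, Real.rpow_natCast, pow_two,
                ← Real.exp_add]
              ring_nf
            · rw [show (2:ℝ) = ((2:ℕ):ℝ) by norm_num, Real.rpow_natCast]
          simp_rw [hpt]
          rw [lintegral_mul_const' _ _ ENNReal.ofReal_ne_top]
          have h1 : ∫⁻ s in Set.Ioc 0 t,
              ENNReal.ofReal (Real.exp (-((2*(ν * r ^ 2))*(t - s))))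
                ≤ ENNReal.ofReal ((2*(ν * r ^ 2))⁻¹) := by
            refine le_trans (lintegral_mono_set fun x hx => hx.2) ?_
            exact (lint_exp_Iic _ (by positivity) t).le
          refine le_trans (mul_le_mul_left h1 _) (le_of_eq ?_)
          rw [← ENNReal.ofReal_mul (by positivity)]
          congr 1
          field_simp
        · -- second factor
          refine le_trans (lintegral_mono_set Set.Ioc_subset_Ioi_self) (le_of_eq ?_)
          refine lintegral_congr fun τ => ?_
          rw [pow2_rpow, mul_pow, ← ENNReal.inv_pow]
    _ = ENNReal.ofReal (((2*ν)⁻¹) ^ (1/2:ℝ)) *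
          (∫⁻ τ in Set.Ioi (0:ℝ),
            ((‖ξ‖₊ : ℝ≥0∞) ^ 2)⁻¹ * (‖S τ ξ‖₊ : ℝ≥0∞) ^ 2) ^ (1/2:ℝ) := by
        rw [ENNReal.ofReal_rpow_of_pos (by positivity)]


lemma point_l2 (hν : 0 < ν) (hS : Measurable (Function.uncurry S)) (hξ : ξ ≠ 0) :
    (∫⁻ t in Set.Ioi (0:ℝ),
        (‖ξ‖₊ : ℝ≥0∞) ^ 2 * (‖duhamelHeatW ν S t ξ‖₊ : ℝ≥0∞) ^ 2) ^ (1/2:ℝ)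
      ≤ ENNReal.ofReal ν⁻¹ *
        (∫⁻ τ in Set.Ioi (0:ℝ),
          ((‖ξ‖₊ : ℝ≥0∞) ^ 2)⁻¹ * (‖S τ ξ‖₊ : ℝ≥0∞) ^ 2) ^ (1/2:ℝ) := by
  have hr : (0:ℝ) < ‖ξ‖ := norm_pos_iff.2 hξ
  have hrE0 : (‖ξ‖₊ : ℝ≥0∞) ≠ 0 := by simp [hξ]
  have hrET : (‖ξ‖₊ : ℝ≥0∞) ≠ ⊤ := ENNReal.coe_ne_top
  have hrE : (‖ξ‖₊ : ℝ≥0∞) = ENNReal.ofReal ‖ξ‖ := (ofReal_norm ξ).symm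
  set K : ℝ → ℝ → ℝ≥0∞ :=
    fun t s => ENNReal.ofReal (Real.exp (-(ν * ‖ξ‖ ^ 2 * (t - s)))) with hKdef
  set F : ℝ → ℝ≥0∞ := fun s => (‖S s ξ‖₊ : ℝ≥0∞) with hFdef
  have haν : (0:ℝ) < ν * ‖ξ‖ ^ 2 := by positivity
  have hK0 : ∀ t s, K t s ≠ 0 := fun t s => (ENNReal.ofReal_pos.2 (Real.exp_pos _)).ne'
  have hKT : ∀ t s, K t s ≠ ⊤ := fun t s => ENNReal.ofReal_ne_top
  have hFm : Measurable F := (hS.comp (measurable_id.prodMk measurable_const)).enorm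
  set c : ℝ≥0∞ := ENNReal.ofReal (ν * ‖ξ‖ ^ 2)⁻¹ with hcdef
  have hcT : c ≠ ⊤ := ENNReal.ofReal_ne_top
  -- step 1 : pointwise bound on the square of w
  have key : ∀ t : ℝ, 0 < t →
      (‖duhamelHeatW ν S t ξ‖₊ : ℝ≥0∞) ^ 2 ≤ c * ∫⁻ s in Set.Ioc 0 t, K t s * F s ^ 2 := by
    intro t ht
    have hKm : Measurable fun s => K t s := by fun_prop
    have hCS : ∫⁻ s in Set.Ioc 0 t, K t s * F s
        ≤ (∫⁻ s in Set.Ioc 0 t, K t s) ^ (1/2:ℝ) *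
          (∫⁻ s in Set.Ioc 0 t, K t s * F s ^ 2) ^ (1/2:ℝ) := by
      have h := lintegral_CS (volume.restrict (Set.Ioc 0 t))
        (f := fun s => (K t s) ^ (1/2:ℝ)) (g := fun s => (K t s) ^ (1/2:ℝ) * F s)
        ((hKm.pow_const _).aemeasurable) (((hKm.pow_const _).mul hFm).aemeasurable)
      have e1 : ∀ s : ℝ, (K t s) ^ (1/2:ℝ) * ((K t s) ^ (1/2:ℝ) * F s) = K t s * F s := by
        intro s
        rw [← mul_assoc, ← ENNReal.rpow_add _ _ (hK0 t s) (hKT t s)]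
        norm_num
      have e2 : ∀ s : ℝ, ((K t s) ^ (1/2:ℝ)) ^ (2:ℝ) = K t s := by
        intro s
        rw [← ENNReal.rpow_mul]
        norm_num
      have e3 : ∀ s : ℝ, ((K t s) ^ (1/2:ℝ) * F s) ^ (2:ℝ) = K t s * F s ^ 2 := by
        intro s
        rw [ENNReal.mul_rpow_of_nonneg _ _ (by norm_num), e2, pow2_rpow]
      simp_rw [e1, e2, e3] at h
      exact h
    have hKint : ∫⁻ s in Set.Ioc 0 t, K t s ≤ c := by
      refine le_trans (lintegral_mono_set fun x hx => hx.2) ?_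
      exact (lint_exp_Iic _ haν t).le
    calc (‖duhamelHeatW ν S t ξ‖₊ : ℝ≥0∞) ^ 2
        ≤ (∫⁻ s in Set.Ioc 0 t, K t s * F s) ^ 2 :=
          pow_le_pow_left' (stepW ν S t ht ξ) 2
      _ ≤ ((∫⁻ s in Set.Ioc 0 t, K t s) ^ (1/2:ℝ) *
            (∫⁻ s in Set.Ioc 0 t, K t s * F s ^ 2) ^ (1/2:ℝ)) ^ 2 :=
          pow_le_pow_left' hCS 2
      _ = (∫⁻ s in Set.Ioc 0 t, K t s) * (∫⁻ s in Set.Ioc 0 t, K t s * F s ^ 2) := by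
          rw [mul_pow, ← pow2_rpow, ← pow2_rpow, ← ENNReal.rpow_mul, ← ENNReal.rpow_mul]
          norm_num
      _ ≤ c * ∫⁻ s in Set.Ioc 0 t, K t s * F s ^ 2 := mul_le_mul_left hKint _
  -- step 2 : integrate in t
  have step2 : (∫⁻ t in Set.Ioi (0:ℝ),
      (‖ξ‖₊ : ℝ≥0∞) ^ 2 * (‖duhamelHeatW ν S t ξ‖₊ : ℝ≥0∞) ^ 2)
      ≤ ((‖ξ‖₊ : ℝ≥0∞) ^ 2 * c) *
          ∫⁻ t in Set.Ioi (0:ℝ), ∫⁻ s in Set.Ioc 0 t, K t s * F s ^ 2 := by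
    rw [← lintegral_const_mul' _ _
      (ENNReal.mul_ne_top (ENNReal.pow_ne_top hrET) hcT)]
    refine lintegral_mono_ae ((ae_restrict_mem measurableSet_Ioi).mono fun t ht => ?_)
    rw [mul_assoc]
    exact mul_le_mul_right (key t ht) _
  -- step 3 : Tonelli
  have step3 : (∫⁻ t in Set.Ioi (0:ℝ), ∫⁻ s in Set.Ioc 0 t, K t s * F s ^ 2)
      ≤ (∫⁻ s in Set.Ioi (0:ℝ), F s ^ 2) * c := by
    have hIoc : ∀ t : ℝ, ∫⁻ s in Set.Ioc 0 t, K t s * F s ^ 2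
        = ∫⁻ s in Set.Ioi (0:ℝ), (Set.Iic t).indicator (fun s => K t s * F s ^ 2) s := by
      intro t
      rw [lintegral_indicator measurableSet_Iic, Measure.restrict_restrict measurableSet_Iic,
        show Set.Iic t ∩ Set.Ioi 0 = Set.Ioc 0 t by
          ext x
          simp only [Set.mem_inter_iff, Set.mem_Iic, Set.mem_Ioi, Set.mem_Ioc]
          tauto]
    have hmeas : AEMeasurable (Function.uncurry fun t s =>
        (Set.Iic t).indicator (fun s' => K t s' * F s' ^ 2) s)
        ((volume.restrict (Set.Ioi 0)).prod (volume.restrict (Set.Ioi 0))) := by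
      have huncurry : (Function.uncurry fun t s =>
          (Set.Iic t).indicator (fun s' => K t s' * F s' ^ 2) s)
          = fun q : ℝ × ℝ => Set.indicator {q : ℝ × ℝ | q.2 ≤ q.1}
              (fun q => K q.1 q.2 * F q.2 ^ 2) q := by
        ext q
        by_cases h : q.2 ≤ q.1 <;> simp [Function.uncurry, Set.indicator, h]
      rw [huncurry]
      refine (Measurable.indicator ?_
        (measurableSet_le measurable_snd measurable_fst)).aemeasurable
      refine Measurable.mul ?_
        (((hS.comp (measurable_snd.prodMk measurable_const)).enorm).pow_const 2)
      fun_prop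
    simp_rw [hIoc]
    rw [lintegral_lintegral_swap hmeas]
    calc ∫⁻ s in Set.Ioi (0:ℝ), ∫⁻ t in Set.Ioi (0:ℝ),
            (Set.Iic t).indicator (fun s' => K t s' * F s' ^ 2) s
        ≤ ∫⁻ s in Set.Ioi (0:ℝ), F s ^ 2 * c := by
          refine lintegral_mono_ae
            ((ae_restrict_mem measurableSet_Ioi).mono fun s hs => ?_)
          have hind : ∀ t : ℝ, (Set.Iic t).indicator (fun s' => K t s' * F s' ^ 2) s
              = (Set.Ici s).indicator (fun t' => K t' s * F s ^ 2) t := by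
            intro t
            by_cases h : s ≤ t <;> simp [Set.indicator, h]
          simp_rw [hind]
          rw [lintegral_indicator measurableSet_Ici,
            Measure.restrict_restrict measurableSet_Ici]
          calc (∫⁻ t in Set.Ici s ∩ Set.Ioi 0, K t s * F s ^ 2)
              ≤ ∫⁻ t in Set.Ici s, K t s * F s ^ 2 :=
                lintegral_mono_set Set.inter_subset_left
            _ = (∫⁻ t in Set.Ici s, K t s) * F s ^ 2 :=
                lintegral_mul_const' _ _ (ENNReal.pow_ne_top ENNReal.coe_ne_top)
            _ = c * F s ^ 2 := by rw [lint_exp_Ici _ haν s]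
            _ = F s ^ 2 * c := mul_comm _ _
      _ = (∫⁻ s in Set.Ioi (0:ℝ), F s ^ 2) * c := lintegral_mul_const' _ _ hcT
  -- step 4 : combine and take square roots
  have hc : c = ENNReal.ofReal ν⁻¹ * ((‖ξ‖₊ : ℝ≥0∞) ^ 2)⁻¹ := by
    rw [hcdef, mul_inv, ENNReal.ofReal_mul (inv_nonneg.2 hν.le)]
    congr 1
    rw [ENNReal.ofReal_inv_of_pos (by positivity), hrE, ENNReal.ofReal_pow (norm_nonneg ξ)]
  have h1 : (‖ξ‖₊ : ℝ≥0∞) ^ 2 * c = ENNReal.ofReal ν⁻¹ := by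
    rw [hc, mul_comm (ENNReal.ofReal ν⁻¹), ← mul_assoc,
      ENNReal.mul_inv_cancel (pow_ne_zero _ hrE0) (ENNReal.pow_ne_top hrET), one_mul]
  have h2 : (∫⁻ s in Set.Ioi (0:ℝ), F s ^ 2) * c
      = ENNReal.ofReal ν⁻¹ *
        ∫⁻ τ in Set.Ioi (0:ℝ), ((‖ξ‖₊ : ℝ≥0∞) ^ 2)⁻¹ * (‖S τ ξ‖₊ : ℝ≥0∞) ^ 2 := by
    rw [hc, lintegral_const_mul' (((‖ξ‖₊ : ℝ≥0∞) ^ 2)⁻¹) _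
      (ENNReal.inv_ne_top.2 (pow_ne_zero _ hrE0))]
    ring
  calc (∫⁻ t in Set.Ioi (0:ℝ),
        (‖ξ‖₊ : ℝ≥0∞) ^ 2 * (‖duhamelHeatW ν S t ξ‖₊ : ℝ≥0∞) ^ 2) ^ (1/2:ℝ)
      ≤ (((‖ξ‖₊ : ℝ≥0∞) ^ 2 * c) * ((∫⁻ s in Set.Ioi (0:ℝ), F s ^ 2) * c)) ^ (1/2:ℝ) := by
        refine ENNReal.rpow_le_rpow ?_ (by norm_num)
        refine step2.trans ?_
        exact mul_le_mul_right step3 _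
    _ = (ENNReal.ofReal ν⁻¹ * (ENNReal.ofReal ν⁻¹ *
          ∫⁻ τ in Set.Ioi (0:ℝ),
            ((‖ξ‖₊ : ℝ≥0∞) ^ 2)⁻¹ * (‖S τ ξ‖₊ : ℝ≥0∞) ^ 2)) ^ (1/2:ℝ) := by
        rw [h1, h2]
    _ = ENNReal.ofReal ν⁻¹ *
          (∫⁻ τ in Set.Ioi (0:ℝ),
            ((‖ξ‖₊ : ℝ≥0∞) ^ 2)⁻¹ * (‖S τ ξ‖₊ : ℝ≥0∞) ^ 2) ^ (1/2:ℝ) := by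
        rw [← mul_assoc, ← pow_two,
          ENNReal.mul_rpow_of_nonneg _ _ (by norm_num : (0:ℝ) ≤ 1/2),
          ← pow2_rpow, ← ENNReal.rpow_mul]
        norm_num

end Pointwise

/-- **Duhamel heat estimate in mixed Fourier-based norms on `ℝ³`.**
Let `ν > 0` and `p ∈ [1,∞]`. There is a constant `C` depending only on `ν` such that for
every measurable `S : (0,∞)×ℝ³ → ℂ`, the function `w(t,ξ) = ∫₀^t e^{-ν|ξ|²(t-s)}S(s,ξ)ds`
satisfies `‖ξ ↦ ess sup_{t>0}|w(t,ξ)|‖_{L^p} + ‖ξ ↦ (∫₀^∞ |ξ|²|w(t,ξ)|²dt)^{1/2}‖_{L^p}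
≤ C ‖ξ ↦ (∫₀^∞ |ξ|^{-2}|S(t,ξ)|²dt)^{1/2}‖_{L^p}`, both sides being elements of `[0,∞]`. -/
theorem duhamel_heat_estimate_whole_space (ν : ℝ) (hν : 0 < ν) (p : ℝ≥0∞) (hp : 1 ≤ p) :
    ∃ C : ℝ≥0, 0 < C ∧
      ∀ S : ℝ → EuclideanSpace ℝ (Fin 3) → ℂ, Measurable (Function.uncurry S) →
        LpXiNorm p (fun ξ => essSup (fun t => (‖duhamelHeatW ν S t ξ‖₊ : ℝ≥0∞))
            (volume.restrict (Set.Ioi 0)))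
        + LpXiNorm p (fun ξ =>
            (∫⁻ t in Set.Ioi (0 : ℝ),
              (‖ξ‖₊ : ℝ≥0∞) ^ 2 * (‖duhamelHeatW ν S t ξ‖₊ : ℝ≥0∞) ^ 2) ^ (1 / 2 : ℝ))
        ≤ C * LpXiNorm p (fun ξ =>
            (∫⁻ t in Set.Ioi (0 : ℝ),
              ((‖ξ‖₊ : ℝ≥0∞) ^ 2)⁻¹ * (‖S t ξ‖₊ : ℝ≥0∞) ^ 2) ^ (1 / 2 : ℝ)) := by
  refine ⟨(((2*ν)⁻¹) ^ (1/2:ℝ) + ν⁻¹).toNNReal, Real.toNNReal_pos.2 (by positivity), ?_⟩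
  intro S hS
  have hz : ∀ᵐ ξ : EuclideanSpace ℝ (Fin 3), ξ ≠ 0 := by
    rw [ae_iff]
    simp [not_not, measure_singleton]
  set G : EuclideanSpace ℝ (Fin 3) → ℝ≥0∞ := fun ξ =>
    (∫⁻ t in Set.Ioi (0:ℝ),
      ((‖ξ‖₊ : ℝ≥0∞) ^ 2)⁻¹ * (‖S t ξ‖₊ : ℝ≥0∞) ^ 2) ^ (1 / 2 : ℝ) with hGdef
  set c1 : ℝ≥0∞ := ENNReal.ofReal (((2*ν)⁻¹) ^ (1/2:ℝ)) with hc1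
  set c2 : ℝ≥0∞ := ENNReal.ofReal ν⁻¹ with hc2
  calc LpXiNorm p (fun ξ => essSup (fun t => (‖duhamelHeatW ν S t ξ‖₊ : ℝ≥0∞))
          (volume.restrict (Set.Ioi 0)))
        + LpXiNorm p (fun ξ =>
            (∫⁻ t in Set.Ioi (0 : ℝ),
              (‖ξ‖₊ : ℝ≥0∞) ^ 2 * (‖duhamelHeatW ν S t ξ‖₊ : ℝ≥0∞) ^ 2) ^ (1 / 2 : ℝ))
      ≤ LpXiNorm p (fun ξ => c1 * G ξ) + LpXiNorm p (fun ξ => c2 * G ξ) := by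
        refine add_le_add (LpXiNorm_mono p (hz.mono fun ξ h => ?_))
          (LpXiNorm_mono p (hz.mono fun ξ h => ?_))
        · exact point_sup hν hS h
        · exact point_l2 hν hS h
    _ ≤ c1 * LpXiNorm p G + c2 * LpXiNorm p G :=
        add_le_add (LpXiNorm_const_mul p hp c1 ENNReal.ofReal_ne_top G)
          (LpXiNorm_const_mul p hp c2 ENNReal.ofReal_ne_top G)
    _ = (c1 + c2) * LpXiNorm p G := (add_mul _ _ _).symm
    _ = ((((2*ν)⁻¹) ^ (1/2:ℝ) + ν⁻¹).toNNReal : ℝ≥0∞) * LpXiNorm p G := by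
        congr 1
        rw [show ((((2*ν)⁻¹) ^ (1/2:ℝ) + ν⁻¹).toNNReal : ℝ≥0∞)
            = ENNReal.ofReal (((2*ν)⁻¹) ^ (1/2:ℝ) + ν⁻¹) from rfl,
          ENNReal.ofReal_add (by positivity) (by positivity)]
end

section
/- Let ν>0 and p∈[1,∞]. There is a constant C depending only on ν such that for every measurable S:(0,∞)×ℤ³→ℂ with S(t,0)=0 for all t, the function w(t,ξ)=∫₀^t e^{-ν|ξ|²(t-s)}S(s,ξ)ds satisfies ‖ ξ ↦ sup_{t≥0}|w(t,ξ)| ‖_{ℓ^p(ℤ³)} + ‖ ξ ↦ (∫₀^∞ ⟨ξ⟩²|w(t,ξ)|² dt)^{1/2} ‖_{ℓ^p(ℤ³)} ≤ C · ‖ ξ ↦ (∫₀^∞ |ξ|^{-2}|S(t,ξ)|² dt)^{1/2} ‖_{ℓ^p(ℤ³\{0})}, where ⟨ξ⟩=(1+|ξ|²)^{1/2}. -/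
open MeasureTheory ENNReal NNReal

/-- The squared Euclidean norm `|ξ|²` of a frequency `ξ ∈ ℤ³`. -/
def znorm2 (ξ : Fin 3 → ℤ) : ℝ := ∑ i, ((ξ i : ℝ)) ^ 2

/-- The `ℓ^p` norm (with values in `[0,∞]`) of a nonnegative extended-real-valued
function on `ℤ³`; for `p = ∞` it is the supremum. -/
noncomputable def lpZNorm (p : ℝ≥0∞) (F : (Fin 3 → ℤ) → ℝ≥0∞) : ℝ≥0∞ :=
  if p = ∞ then ⨆ ξ, F ξ
  else (∑' ξ, F ξ ^ p.toReal) ^ (1 / p.toReal)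

/-- Fourier-side Duhamel integral of the heat semigroup on the torus against a source `S`:
`w(t,ξ) = ∫₀^t e^{-ν|ξ|²(t-s)} S(s,ξ) ds`, `ξ ∈ ℤ³`. -/
noncomputable def duhamelHeatWT (ν : ℝ) (S : ℝ → (Fin 3 → ℤ) → ℂ) (t : ℝ)
    (ξ : Fin 3 → ℤ) : ℂ :=
  ∫ s in (0 : ℝ)..t, (Real.exp (-(ν * znorm2 ξ * (t - s))) : ℂ) * S s ξ

/-! ### Auxiliary lemmas -/

lemma expInt_Ioi_aux {a : ℝ} (ha : 0 < a) :
    ∫ x in Set.Ioi (0:ℝ), Real.exp (-(a * x)) = a⁻¹ := by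
  have h := MeasureTheory.integral_comp_mul_left_Ioi (fun y => Real.exp (-y)) 0 ha
  simp only [mul_zero, integral_exp_neg_Ioi, neg_zero, Real.exp_zero, smul_eq_mul, mul_one] at h
  exact h

lemma lint_Ici_exp_aux {a : ℝ} (ha : 0 < a) :
    ∫⁻ x in Set.Ici (0:ℝ), ENNReal.ofReal (Real.exp (-(a * x))) = ENNReal.ofReal a⁻¹ := by
  rw [← setLIntegral_congr (MeasureTheory.Ioi_ae_eq_Ici (a := (0:ℝ)))]
  rw [← MeasureTheory.ofReal_integral_eq_lintegral_ofReal]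
  · rw [expInt_Ioi_aux ha]
  · simpa [neg_mul] using (exp_neg_integrableOn_Ioi 0 ha).integrable
  · filter_upwards with x using (Real.exp_pos _).le

lemma lint_Ici_exp_shift_aux {a : ℝ} (ha : 0 < a) (c : ℝ) :
    ∫⁻ x in Set.Ici c, ENNReal.ofReal (Real.exp (-(a * (x - c)))) = ENNReal.ofReal a⁻¹ := by
  have h := (measurePreserving_sub_right (volume : Measure ℝ) c).setLIntegral_comp_preimage_emb
    (Homeomorph.subRight c).measurableEmbedding
    (fun y => ENNReal.ofReal (Real.exp (-(a * y)))) (Set.Ici 0)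
  have hpre : (fun x => x - c) ⁻¹' Set.Ici 0 = Set.Ici c := by
    ext x; simp [sub_nonneg]
  rw [← lint_Ici_exp_aux ha, ← h]
  norm_num [hpre]

lemma lint_Iic_exp_aux {a : ℝ} (ha : 0 < a) (c : ℝ) :
    ∫⁻ x in Set.Iic c, ENNReal.ofReal (Real.exp (-(a * (c - x)))) = ENNReal.ofReal a⁻¹ := by
  have h := (Measure.measurePreserving_sub_left
      (volume : Measure ℝ) c).setLIntegral_comp_preimage_emb
    (Homeomorph.subLeft c).measurableEmbedding
    (fun y => ENNReal.ofReal (Real.exp (-(a * y)))) (Set.Ici 0)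
  have hpre : (fun x => c - x) ⁻¹' Set.Ici 0 = Set.Iic c := by
    ext x; simp [sub_nonneg]
  rw [← lint_Ici_exp_aux ha, ← h]
  norm_num [hpre]

lemma sqrt_sq_ennreal_aux (z : ℝ≥0∞) : (z ^ (1/2:ℝ))^2 = z := by
  rw [← ENNReal.rpow_natCast (z ^ (1/2:ℝ)) 2, ← ENNReal.rpow_mul]
  norm_num

lemma sqrt_sq_ennreal_aux' (x : ℝ≥0∞) : (x ^ 2) ^ (1/2:ℝ) = x := by
  rw [← ENNReal.rpow_natCast x 2, ← ENNReal.rpow_mul]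
  norm_num

lemma one_le_znorm2_aux {ξ : Fin 3 → ℤ} (h : ξ ≠ 0) : 1 ≤ znorm2 ξ := by
  obtain ⟨i, hi⟩ := Function.ne_iff.mp h
  have h1 : (1:ℝ) ≤ (ξ i : ℝ)^2 := by
    have h2 : (1:ℤ) ≤ (ξ i)^2 := by
      rcases lt_or_gt_of_ne (show ξ i ≠ 0 by simpa using hi) with h'|h' <;> nlinarith
    exact_mod_cast h2
  calc (1:ℝ) ≤ (ξ i:ℝ)^2 := h1
    _ ≤ znorm2 ξ := Finset.single_le_sum (fun j _ => sq_nonneg ((ξ j : ℝ))) (Finset.mem_univ i)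

lemma lpZNorm_mono_aux (p : ℝ≥0∞) {F G : (Fin 3 → ℤ) → ℝ≥0∞} (h : ∀ ξ, F ξ ≤ G ξ) :
    lpZNorm p F ≤ lpZNorm p G := by
  unfold lpZNorm
  split
  · exact iSup_mono h
  · exact ENNReal.rpow_le_rpow (ENNReal.tsum_le_tsum fun ξ =>
      ENNReal.rpow_le_rpow (h ξ) ENNReal.toReal_nonneg) (by positivity)

lemma lpZNorm_const_mul_aux {p : ℝ≥0∞} (hp : 1 ≤ p) (c : ℝ≥0∞) (G : (Fin 3 → ℤ) → ℝ≥0∞) :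
    lpZNorm p (fun ξ => c * G ξ) = c * lpZNorm p G := by
  unfold lpZNorm
  split
  · rw [ENNReal.mul_iSup]
  · rename_i hptop
    have hq : 0 < p.toReal := ENNReal.toReal_pos (by intro h0; simp [h0] at hp) hptop
    simp_rw [ENNReal.mul_rpow_of_nonneg _ _ hq.le, ENNReal.tsum_mul_left]
    rw [ENNReal.mul_rpow_of_nonneg _ _ (by positivity : (0:ℝ) ≤ 1 / p.toReal),
      ← ENNReal.rpow_mul, mul_one_div_cancel hq.ne', ENNReal.rpow_one]

lemma lpZNorm_le_mul_aux {p : ℝ≥0∞} (hp : 1 ≤ p) {c : ℝ≥0∞} {F G : (Fin 3 → ℤ) → ℝ≥0∞}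
    (h : ∀ ξ, F ξ ≤ c * G ξ) : lpZNorm p F ≤ c * lpZNorm p G := by
  calc lpZNorm p F ≤ lpZNorm p (fun ξ => c * G ξ) := lpZNorm_mono_aux p h
  _ = c * lpZNorm p G := lpZNorm_const_mul_aux hp c G

/-- Cauchy–Schwarz bound for the Duhamel integral. -/
lemma duhamel_sq_bound_aux (ν : ℝ) (hν : 0 < ν) (S : ℝ → (Fin 3 → ℤ) → ℂ)
    (ξ : Fin 3 → ℤ) (hm : Measurable fun s => S s ξ) (hn : 0 < znorm2 ξ)
    {t : ℝ} (ht : 0 ≤ t) :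
    (‖duhamelHeatWT ν S t ξ‖₊ : ℝ≥0∞) ^ 2 ≤
      ENNReal.ofReal (ν * znorm2 ξ)⁻¹ *
        ∫⁻ s in Set.Ioc 0 t, ENNReal.ofReal (Real.exp (-(ν * znorm2 ξ * (t - s)))) *
          (‖S s ξ‖₊ : ℝ≥0∞) ^ 2 := by
  set a := ν * znorm2 ξ with ha_def
  have ha : 0 < a := mul_pos hν hn
  set E : ℝ → ℝ≥0∞ := fun s => ENNReal.ofReal (Real.exp (-(a * (t - s)) / 2)) with hE
  have hEsq : ∀ s, E s * E s = ENNReal.ofReal (Real.exp (-(a * (t - s)))) := by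
    intro s
    rw [hE, ← ENNReal.ofReal_mul (Real.exp_nonneg _), ← Real.exp_add, add_halves]
  have hEmeas : Measurable E := by
    apply Measurable.ennreal_ofReal
    exact (Real.continuous_exp.comp (by continuity)).measurable
  have h1 : (‖duhamelHeatWT ν S t ξ‖₊ : ℝ≥0∞) ≤
      ∫⁻ s in Set.Ioc 0 t, E s * (E s * (‖S s ξ‖₊ : ℝ≥0∞)) := by
    rw [duhamelHeatWT, intervalIntegral.integral_of_le ht]
    refine (enorm_integral_le_lintegral_enorm _).trans_eq ?_
    refine lintegral_congr fun s => ?_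
    change (‖((Real.exp (-(a * (t - s))) : ℂ)) * S s ξ‖₊ : ℝ≥0∞) = _
    rw [nnnorm_mul, ENNReal.coe_mul, Complex.nnnorm_real, ← enorm_eq_nnnorm,
      Real.enorm_eq_ofReal (Real.exp_nonneg _), ← hEsq s, mul_assoc]
  have holder := ENNReal.lintegral_mul_le_Lp_mul_Lq (volume.restrict (Set.Ioc 0 t))
    (Real.HolderConjugate.two_two)
    hEmeas.aemeasurable (hEmeas.mul hm.enorm).aemeasurable
  have h2pow : ∀ z : ℝ≥0∞, z ^ (2:ℝ) = z * z := fun z => by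
    rw [show ((2:ℝ)) = ((2:ℕ):ℝ) by norm_num, ENNReal.rpow_natCast]; ring
  have hA : (∫⁻ s in Set.Ioc 0 t, E s ^ (2:ℝ)) ≤ ENNReal.ofReal a⁻¹ := by
    calc (∫⁻ s in Set.Ioc 0 t, E s ^ (2:ℝ))
        = ∫⁻ s in Set.Ioc 0 t, ENNReal.ofReal (Real.exp (-(a * (t - s)))) := by
          simp_rw [h2pow, hEsq]
      _ ≤ ∫⁻ s in Set.Iic t, ENNReal.ofReal (Real.exp (-(a * (t - s)))) :=
          lintegral_mono_set (fun x hx => hx.2)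
      _ = ENNReal.ofReal a⁻¹ := lint_Iic_exp_aux ha t
  have hB : (∫⁻ s in Set.Ioc 0 t, (E s * (‖S s ξ‖₊ : ℝ≥0∞)) ^ (2:ℝ))
      = ∫⁻ s in Set.Ioc 0 t,
          ENNReal.ofReal (Real.exp (-(a * (t - s)))) * (‖S s ξ‖₊ : ℝ≥0∞) ^ 2 := by
    refine lintegral_congr fun s => ?_
    rw [h2pow, mul_mul_mul_comm, hEsq s, sq]
  set B := ∫⁻ s in Set.Ioc 0 t,
    ENNReal.ofReal (Real.exp (-(a * (t - s)))) * (‖S s ξ‖₊ : ℝ≥0∞) ^ 2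
  have h3 : (‖duhamelHeatWT ν S t ξ‖₊ : ℝ≥0∞) ≤
      (ENNReal.ofReal a⁻¹) ^ (1/2:ℝ) * B ^ (1/2:ℝ) := by
    refine h1.trans (holder.trans ?_)
    rw [show (∫⁻ a in Set.Ioc 0 t, (E * fun x => ‖S x ξ‖ₑ) a ^ (2:ℝ)) = B from hB]
    exact mul_le_mul_left (ENNReal.rpow_le_rpow hA (by norm_num)) _
  calc (‖duhamelHeatWT ν S t ξ‖₊ : ℝ≥0∞) ^ 2
      ≤ ((ENNReal.ofReal a⁻¹) ^ (1/2:ℝ) * B ^ (1/2:ℝ)) ^ 2 := pow_le_pow_left' h3 2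
    _ = ENNReal.ofReal a⁻¹ * B := by
        rw [mul_pow, sqrt_sq_ennreal_aux, sqrt_sq_ennreal_aux]

lemma ofReal_mul_inv_split_aux {ν n : ℝ} (hν : 0 < ν) (hn : 0 < n) :
    ENNReal.ofReal (ν * n)⁻¹ = ENNReal.ofReal ν⁻¹ * (ENNReal.ofReal n)⁻¹ := by
  rw [mul_inv, ENNReal.ofReal_mul (by positivity), ENNReal.ofReal_inv_of_pos hn]

lemma sup_est_aux (ν : ℝ) (hν : 0 < ν) (S : ℝ → (Fin 3 → ℤ) → ℂ)
    (ξ : Fin 3 → ℤ) (hm : Measurable fun s => S s ξ) (hn : 1 ≤ znorm2 ξ) :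
    (⨆ t ∈ Set.Ici (0:ℝ), (‖duhamelHeatWT ν S t ξ‖₊ : ℝ≥0∞)) ≤
      (ENNReal.ofReal ν⁻¹) ^ (1/2:ℝ) *
        ((ENNReal.ofReal (znorm2 ξ))⁻¹ * ∫⁻ s in Set.Ioi (0:ℝ),
          (‖S s ξ‖₊ : ℝ≥0∞) ^ 2) ^ (1/2:ℝ) := by
  have hn0 : 0 < znorm2 ξ := lt_of_lt_of_le one_pos hn
  refine iSup₂_le fun t ht => ?_
  have h := duhamel_sq_bound_aux ν hν S ξ hm hn0 ht
  have h2 : (‖duhamelHeatWT ν S t ξ‖₊ : ℝ≥0∞) ^ 2 ≤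
      ENNReal.ofReal ν⁻¹ *
        ((ENNReal.ofReal (znorm2 ξ))⁻¹ *
          ∫⁻ s in Set.Ioi (0:ℝ), (‖S s ξ‖₊ : ℝ≥0∞) ^ 2) := by
    refine h.trans ?_
    rw [ofReal_mul_inv_split_aux hν hn0, mul_assoc]
    refine mul_le_mul_right (mul_le_mul_right ?_ _) _
    calc (∫⁻ s in Set.Ioc 0 t, ENNReal.ofReal (Real.exp (-(ν * znorm2 ξ * (t - s)))) *
            (‖S s ξ‖₊ : ℝ≥0∞) ^ 2)
        ≤ ∫⁻ s in Set.Ioc 0 t, (‖S s ξ‖₊ : ℝ≥0∞) ^ 2 := by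
          refine setLIntegral_mono (by exact hm.enorm.pow_const 2) fun s hs => ?_
          refine mul_le_of_le_one_left (by positivity) ?_
          refine ENNReal.ofReal_le_one.2 (Real.exp_le_one_iff.2 ?_)
          simp only [neg_nonpos]
          exact mul_nonneg (by positivity) (sub_nonneg.2 hs.2)
      _ ≤ ∫⁻ s in Set.Ioi (0:ℝ), (‖S s ξ‖₊ : ℝ≥0∞) ^ 2 :=
          lintegral_mono_set (fun x hx => hx.1)
  calc (‖duhamelHeatWT ν S t ξ‖₊ : ℝ≥0∞)
      = ((‖duhamelHeatWT ν S t ξ‖₊ : ℝ≥0∞) ^ 2) ^ (1/2:ℝ) := (sqrt_sq_ennreal_aux' _).symm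
    _ ≤ (ENNReal.ofReal ν⁻¹ *
        ((ENNReal.ofReal (znorm2 ξ))⁻¹ *
          ∫⁻ s in Set.Ioi (0:ℝ), (‖S s ξ‖₊ : ℝ≥0∞) ^ 2)) ^ (1/2:ℝ) :=
        ENNReal.rpow_le_rpow h2 (by norm_num)
    _ = _ := ENNReal.mul_rpow_of_nonneg _ _ (by norm_num)

lemma energy_est_aux (ν : ℝ) (hν : 0 < ν) (S : ℝ → (Fin 3 → ℤ) → ℂ)
    (ξ : Fin 3 → ℤ) (hm : Measurable fun s => S s ξ) (hn : 1 ≤ znorm2 ξ) :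
    (∫⁻ t in Set.Ioi (0:ℝ),
        ENNReal.ofReal (1 + znorm2 ξ) * (‖duhamelHeatWT ν S t ξ‖₊ : ℝ≥0∞) ^ 2) ≤
      ENNReal.ofReal (2 * ν⁻¹ * ν⁻¹) *
        ((ENNReal.ofReal (znorm2 ξ))⁻¹ *
          ∫⁻ s in Set.Ioi (0:ℝ), (‖S s ξ‖₊ : ℝ≥0∞) ^ 2) := by
  have hn0 : 0 < znorm2 ξ := lt_of_lt_of_le one_pos hn
  set n := znorm2 ξ with hn_def
  set a := ν * n with ha_def
  have ha : 0 < a := mul_pos hν hn0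
  set f : ℝ → ℝ≥0∞ := fun s => (‖S s ξ‖₊ : ℝ≥0∞) ^ 2 with hf_def
  have hfm : Measurable f := hm.enorm.pow_const 2
  have hffin : ∀ s, f s ≠ ∞ := fun s => by simp [hf_def]
  set K : ℝ → ℝ → ℝ≥0∞ := fun t s => ENNReal.ofReal (Real.exp (-(a * (t - s)))) with hK_def
  set I := ∫⁻ s in Set.Ioi (0:ℝ), f s with hI_def
  set Φ : ℝ → ℝ≥0∞ := fun t => ∫⁻ s in Set.Ioc 0 t, K t s * f s with hΦ_def
  have step1 : (∫⁻ t in Set.Ioi (0:ℝ),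
      ENNReal.ofReal (1 + n) * (‖duhamelHeatWT ν S t ξ‖₊ : ℝ≥0∞) ^ 2)
      ≤ (ENNReal.ofReal (1 + n) * ENNReal.ofReal a⁻¹) * ∫⁻ t in Set.Ioi (0:ℝ), Φ t := by
    rw [← lintegral_const_mul' _ _ (by finiteness)]
    refine lintegral_mono_ae ?_
    filter_upwards [ae_restrict_mem measurableSet_Ioi] with t ht
    rw [mul_assoc]
    exact mul_le_mul_right (duhamel_sq_bound_aux ν hν S ξ hm hn0 (le_of_lt ht)) _
  have hΦ_ind : ∀ t, Φ t
      = ∫⁻ s in Set.Ioi (0:ℝ), (Set.Iic t).indicator (fun s => K t s * f s) s := by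
    intro t
    rw [lintegral_indicator measurableSet_Iic, Measure.restrict_restrict measurableSet_Iic,
      Set.inter_comm, Set.Ioi_inter_Iic]
  have hker : Measurable (Function.uncurry fun t s =>
      (Set.Iic t).indicator (fun s' => K t s' * f s') s) := by
    have heq : (Function.uncurry fun t s => (Set.Iic t).indicator (fun s' => K t s' * f s') s)
        = Set.indicator {p : ℝ × ℝ | p.2 ≤ p.1} (fun p => K p.1 p.2 * f p.2) := by
      ext p
      by_cases h : p.2 ≤ p.1 <;>
        simp [Function.uncurry, Set.indicator_apply, h]
    rw [heq]
    refine Measurable.indicator ?_ (measurableSet_le measurable_snd measurable_fst)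
    refine Measurable.mul ?_ (hfm.comp measurable_snd)
    refine Measurable.ennreal_ofReal ?_
    exact (Real.continuous_exp.comp (by continuity)).measurable
  have swap := lintegral_lintegral_swap (μ := volume.restrict (Set.Ioi (0:ℝ)))
    (ν := volume.restrict (Set.Ioi (0:ℝ))) hker.aemeasurable
  have inner_bound : ∀ s : ℝ, (∫⁻ t in Set.Ioi (0:ℝ),
      (Set.Iic t).indicator (fun s' => K t s' * f s') s) ≤ ENNReal.ofReal a⁻¹ * f s := by
    intro s
    have hsw : ∀ t, (Set.Iic t).indicator (fun s' => K t s' * f s') s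
        = (Set.Ici s).indicator (fun t' => K t' s * f s) t := by
      intro t
      by_cases h : s ≤ t <;> simp [Set.indicator_apply, h]
    simp_rw [hsw]
    rw [lintegral_indicator measurableSet_Ici, Measure.restrict_restrict measurableSet_Ici]
    calc ∫⁻ t in Set.Ici s ∩ Set.Ioi 0, K t s * f s
        ≤ ∫⁻ t in Set.Ici s, K t s * f s := lintegral_mono_set Set.inter_subset_left
      _ = (∫⁻ t in Set.Ici s, K t s) * f s := lintegral_mul_const' _ _ (hffin s)
      _ = ENNReal.ofReal a⁻¹ * f s := by rw [hK_def, lint_Ici_exp_shift_aux ha s]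
  have step2 : (∫⁻ t in Set.Ioi (0:ℝ), Φ t) ≤ ENNReal.ofReal a⁻¹ * I := by
    calc (∫⁻ t in Set.Ioi (0:ℝ), Φ t)
        = ∫⁻ s in Set.Ioi (0:ℝ), ∫⁻ t in Set.Ioi (0:ℝ),
            (Set.Iic t).indicator (fun s' => K t s' * f s') s := by
          rw [← swap]; exact lintegral_congr hΦ_ind
      _ ≤ ∫⁻ s in Set.Ioi (0:ℝ), ENNReal.ofReal a⁻¹ * f s :=
          lintegral_mono fun s => inner_bound s
      _ = ENNReal.ofReal a⁻¹ * I := lintegral_const_mul' _ _ (by finiteness)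
  refine step1.trans ((mul_le_mul_right step2 _).trans ?_)
  have harith : ENNReal.ofReal (1 + n) * ENNReal.ofReal a⁻¹ * ENNReal.ofReal a⁻¹
      ≤ ENNReal.ofReal (2 * ν⁻¹ * ν⁻¹) * (ENNReal.ofReal n)⁻¹ := by
    rw [← ENNReal.ofReal_inv_of_pos hn0, ← ENNReal.ofReal_mul (by positivity),
      ← ENNReal.ofReal_mul (by positivity), ← ENNReal.ofReal_mul (by positivity)]
    refine ENNReal.ofReal_le_ofReal ?_
    have h2n : 1 + n ≤ 2 * n := by linarith
    have hainv : (0:ℝ) ≤ a⁻¹ := by positivity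
    calc (1 + n) * a⁻¹ * a⁻¹ ≤ (2*n) * a⁻¹ * a⁻¹ :=
          mul_le_mul_of_nonneg_right (mul_le_mul_of_nonneg_right h2n hainv) hainv
      _ = 2 * ν⁻¹ * ν⁻¹ * n⁻¹ := by
          rw [ha_def]; field_simp
  calc ENNReal.ofReal (1+n) * ENNReal.ofReal a⁻¹ * (ENNReal.ofReal a⁻¹ * I)
      = (ENNReal.ofReal (1+n) * ENNReal.ofReal a⁻¹ * ENNReal.ofReal a⁻¹) * I := by ring
    _ ≤ (ENNReal.ofReal (2*ν⁻¹*ν⁻¹) * (ENNReal.ofReal n)⁻¹) * I := mul_le_mul_left harith I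
    _ = ENNReal.ofReal (2*ν⁻¹*ν⁻¹) * ((ENNReal.ofReal n)⁻¹ * I) := by ring

/-- **Duhamel heat estimate in mixed Fourier-based norms on the torus `𝕋³`.**
Let `ν > 0` and `p ∈ [1,∞]`. There is a constant `C` depending only on `ν` such that for
every measurable `S : (0,∞)×ℤ³ → ℂ` with `S(t,0) = 0` for all `t`, the function
`w(t,ξ) = ∫₀^t e^{-ν|ξ|²(t-s)}S(s,ξ)ds` satisfies
`‖ξ ↦ sup_{t≥0}|w(t,ξ)|‖_{ℓ^p} + ‖ξ ↦ (∫₀^∞ ⟨ξ⟩²|w(t,ξ)|²dt)^{1/2}‖_{ℓ^p}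
≤ C ‖ξ ↦ (∫₀^∞ |ξ|^{-2}|S(t,ξ)|²dt)^{1/2}‖_{ℓ^p(ℤ³∖{0})}`, where `⟨ξ⟩² = 1 + |ξ|²`. -/
theorem duhamel_heat_estimate_torus (ν : ℝ) (hν : 0 < ν) (p : ℝ≥0∞) (hp : 1 ≤ p) :
    ∃ C : ℝ≥0, 0 < C ∧
      ∀ S : ℝ → (Fin 3 → ℤ) → ℂ, Measurable (Function.uncurry S) →
        (∀ t : ℝ, S t 0 = 0) →
        lpZNorm p (fun ξ => ⨆ t ∈ Set.Ici (0 : ℝ), (‖duhamelHeatWT ν S t ξ‖₊ : ℝ≥0∞))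
        + lpZNorm p (fun ξ =>
            (∫⁻ t in Set.Ioi (0 : ℝ),
              ENNReal.ofReal (1 + znorm2 ξ) *
                (‖duhamelHeatWT ν S t ξ‖₊ : ℝ≥0∞) ^ 2) ^ (1 / 2 : ℝ))
        ≤ C * lpZNorm p (fun ξ =>
            if ξ = 0 then 0 else
              (∫⁻ t in Set.Ioi (0 : ℝ),
                (ENNReal.ofReal (znorm2 ξ))⁻¹ * (‖S t ξ‖₊ : ℝ≥0∞) ^ 2) ^ (1 / 2 : ℝ)) := by
  set c1 : ℝ≥0∞ := (ENNReal.ofReal ν⁻¹) ^ (1/2:ℝ) with hc1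
  set c2 : ℝ≥0∞ := (ENNReal.ofReal (2 * ν⁻¹ * ν⁻¹)) ^ (1/2:ℝ) with hc2
  have hc1top : c1 ≠ ∞ := ENNReal.rpow_ne_top_of_nonneg (by norm_num) ENNReal.ofReal_ne_top
  have hc2top : c2 ≠ ∞ := ENNReal.rpow_ne_top_of_nonneg (by norm_num) ENNReal.ofReal_ne_top
  refine ⟨(c1 + c2).toNNReal + 1, by positivity, fun S hS hS0 => ?_⟩
  have hm : ∀ ξ, Measurable fun s => S s ξ := fun ξ =>
    hS.comp (measurable_id.prodMk measurable_const)
  have hw0 : ∀ t : ℝ, duhamelHeatWT ν S t 0 = 0 := fun t => by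
    simp [duhamelHeatWT, hS0]
  set G : (Fin 3 → ℤ) → ℝ≥0∞ := fun ξ =>
    if ξ = 0 then 0 else
      (∫⁻ t in Set.Ioi (0 : ℝ),
        (ENNReal.ofReal (znorm2 ξ))⁻¹ * (‖S t ξ‖₊ : ℝ≥0∞) ^ 2) ^ (1 / 2 : ℝ) with hG
  have hGval : ∀ ξ, ξ ≠ 0 → G ξ =
      ((ENNReal.ofReal (znorm2 ξ))⁻¹ *
        ∫⁻ t in Set.Ioi (0 : ℝ), (‖S t ξ‖₊ : ℝ≥0∞) ^ 2) ^ (1 / 2 : ℝ) := by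
    intro ξ hξ
    rw [hG]
    simp only [hξ, if_false]
    rw [lintegral_const_mul' _ _ (ENNReal.inv_ne_top.2
      (ENNReal.ofReal_pos.2 (lt_of_lt_of_le one_pos (one_le_znorm2_aux hξ))).ne')]
  have hF : ∀ ξ, (⨆ t ∈ Set.Ici (0 : ℝ), (‖duhamelHeatWT ν S t ξ‖₊ : ℝ≥0∞)) ≤ c1 * G ξ := by
    intro ξ
    by_cases hξ : ξ = 0
    · subst hξ
      refine iSup₂_le fun t ht => ?_
      simp [hw0 t]
    · rw [hGval ξ hξ]
      exact sup_est_aux ν hν S ξ (hm ξ) (one_le_znorm2_aux hξ)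
  have hH : ∀ ξ, ((∫⁻ t in Set.Ioi (0 : ℝ),
      ENNReal.ofReal (1 + znorm2 ξ) *
        (‖duhamelHeatWT ν S t ξ‖₊ : ℝ≥0∞) ^ 2) ^ (1 / 2 : ℝ)) ≤ c2 * G ξ := by
    intro ξ
    by_cases hξ : ξ = 0
    · subst hξ
      have : ∀ t : ℝ, ENNReal.ofReal (1 + znorm2 (0 : Fin 3 → ℤ)) *
          (‖duhamelHeatWT ν S t 0‖₊ : ℝ≥0∞) ^ 2 = 0 := fun t => by simp [hw0 t]
      rw [lintegral_congr this]
      simp [ENNReal.zero_rpow_of_pos (by norm_num : (0:ℝ) < 1/2)]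
    · rw [hGval ξ hξ]
      calc ((∫⁻ t in Set.Ioi (0 : ℝ),
            ENNReal.ofReal (1 + znorm2 ξ) * (‖duhamelHeatWT ν S t ξ‖₊ : ℝ≥0∞) ^ 2) ^ (1 / 2 : ℝ))
          ≤ (ENNReal.ofReal (2 * ν⁻¹ * ν⁻¹) *
              ((ENNReal.ofReal (znorm2 ξ))⁻¹ *
                ∫⁻ s in Set.Ioi (0:ℝ), (‖S s ξ‖₊ : ℝ≥0∞) ^ 2)) ^ (1 / 2 : ℝ) :=
            ENNReal.rpow_le_rpow (energy_est_aux ν hν S ξ (hm ξ) (one_le_znorm2_aux hξ))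
              (by norm_num)
        _ = c2 * ((ENNReal.ofReal (znorm2 ξ))⁻¹ *
              ∫⁻ s in Set.Ioi (0:ℝ), (‖S s ξ‖₊ : ℝ≥0∞) ^ 2) ^ (1 / 2 : ℝ) :=
            ENNReal.mul_rpow_of_nonneg _ _ (by norm_num)
  calc lpZNorm p (fun ξ => ⨆ t ∈ Set.Ici (0 : ℝ), (‖duhamelHeatWT ν S t ξ‖₊ : ℝ≥0∞))
        + lpZNorm p (fun ξ =>
            (∫⁻ t in Set.Ioi (0 : ℝ),
              ENNReal.ofReal (1 + znorm2 ξ) *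
                (‖duhamelHeatWT ν S t ξ‖₊ : ℝ≥0∞) ^ 2) ^ (1 / 2 : ℝ))
      ≤ c1 * lpZNorm p G + c2 * lpZNorm p G :=
        add_le_add (lpZNorm_le_mul_aux hp hF) (lpZNorm_le_mul_aux hp hH)
    _ = (c1 + c2) * lpZNorm p G := (add_mul _ _ _).symm
    _ ≤ ((c1 + c2).toNNReal + 1 : ℝ≥0) * lpZNorm p G := by
        refine mul_le_mul_left ?_ _
        rw [ENNReal.coe_add, ENNReal.coe_toNNReal (by finiteness)]
        exact le_self_add
    _ = _ := rfl
end

section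
/- Let β,K,κ>0 and let γ:[0,κ]→ℝ satisfy γ(r) ≤ βr²/2 and |γ(r)| ≤ Kr³ for all r∈[0,κ]. Then for all ε∈(0,1], all t≥0 and all x≥0 with εx ≤ κ, one has e^{-βtx²} · | e^{tγ(εx)/ε²} − 1 | ≤ min{ 2, (2K/(βe)) ε x }. -/
lemma exp_sub_one_abs_le (a : ℝ) :
    |Real.exp a - 1| ≤ |a| * max (Real.exp a) 1 := by
  rcases le_or_gt 0 a with h | h
  · have h1 : (1:ℝ) ≤ Real.exp a := Real.one_le_exp h
    rw [abs_of_nonneg (by linarith), abs_of_nonneg h]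
    have h2 : 1 - a ≤ Real.exp (-a) := by
      have := Real.add_one_le_exp (-a); linarith
    have h3 : (1 - a) * Real.exp a ≤ Real.exp (-a) * Real.exp a :=
      mul_le_mul_of_nonneg_right h2 (Real.exp_pos a).le
    rw [← Real.exp_add, neg_add_cancel, Real.exp_zero] at h3
    have hmax : max (Real.exp a) 1 = Real.exp a := max_eq_left h1
    rw [hmax]; nlinarith
  · have h1 : Real.exp a ≤ 1 := Real.exp_le_one_iff.mpr h.le
    rw [abs_of_nonpos (by linarith), abs_of_neg h]
    have h2 : 1 + a ≤ Real.exp a := by have := Real.add_one_le_exp a; linarith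
    have hmax : (1:ℝ) ≤ max (Real.exp a) 1 := le_max_right _ _
    nlinarith

lemma mul_exp_neg_le (v : ℝ) (hv : 0 ≤ v) : v * Real.exp (-v) ≤ Real.exp (-1) := by
  have h : v ≤ Real.exp (v - 1) := by have := Real.add_one_le_exp (v - 1); linarith
  have h2 : v * Real.exp (-v) ≤ Real.exp (v - 1) * Real.exp (-v) :=
    mul_le_mul_of_nonneg_right h (Real.exp_pos _).le
  rw [← Real.exp_add] at h2
  calc v * Real.exp (-v) ≤ Real.exp (v - 1 + -v) := h2
    _ = Real.exp (-1) := by ring_nf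

/-- **Small-frequency remainder estimate for semigroup expansions.**
Let `β, K, κ > 0` and let `γ : [0,κ] → ℝ` satisfy `γ(r) ≤ βr²/2` and `|γ(r)| ≤ Kr³` on `[0,κ]`.
Then for all `ε ∈ (0,1]`, all `t ≥ 0` and all `x ≥ 0` with `εx ≤ κ`, one has
`e^{-βtx²} · |e^{tγ(εx)/ε²} − 1| ≤ min{2, (2K/(βe)) ε x}`. -/
theorem semigroup_remainder_estimate (β K κ : ℝ) (hβ : 0 < β) (hK : 0 < K) (hκ : 0 < κ)
    (γ : ℝ → ℝ)
    (hγ₁ : ∀ r ∈ Set.Icc 0 κ, γ r ≤ β * r ^ 2 / 2)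
    (hγ₂ : ∀ r ∈ Set.Icc 0 κ, |γ r| ≤ K * r ^ 3) :
    ∀ ε : ℝ, 0 < ε → ε ≤ 1 → ∀ t : ℝ, 0 ≤ t → ∀ x : ℝ, 0 ≤ x → ε * x ≤ κ →
      Real.exp (-(β * t * x ^ 2)) * |Real.exp (t * γ (ε * x) / ε ^ 2) - 1| ≤
        min 2 ((2 * K / (β * Real.exp 1)) * ε * x) := by
  intro ε hε hε1 t ht x hx hεx
  have hmem : ε * x ∈ Set.Icc 0 κ := ⟨mul_nonneg hε.le hx, hεx⟩
  set a := t * γ (ε * x) / ε ^ 2 with ha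
  have hε2 : (0:ℝ) < ε ^ 2 := by positivity
  -- upper bound on a
  have haub : a ≤ β * t * x ^ 2 / 2 := by
    have h1 : t * γ (ε * x) ≤ t * (β * (ε * x) ^ 2 / 2) :=
      mul_le_mul_of_nonneg_left (hγ₁ _ hmem) ht
    have h2 : a ≤ t * (β * (ε * x) ^ 2 / 2) / ε ^ 2 := by
      rw [ha]; exact div_le_div_of_nonneg_right h1 hε2.le |>.trans_eq rfl
    calc a ≤ t * (β * (ε * x) ^ 2 / 2) / ε ^ 2 := h2
      _ = β * t * x ^ 2 / 2 := by field_simp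
  -- bound on |a|
  have habs : |a| ≤ K * t * ε * x ^ 3 := by
    have h1 : |t * γ (ε * x)| ≤ t * (K * (ε * x) ^ 3) := by
      rw [abs_mul, abs_of_nonneg ht]
      exact mul_le_mul_of_nonneg_left (hγ₂ _ hmem) ht
    have : |a| = |t * γ (ε * x)| / ε ^ 2 := by
      rw [ha, abs_div, abs_of_pos hε2]
    rw [this]
    rw [div_le_iff₀ hε2]
    calc |t * γ (ε * x)| ≤ t * (K * (ε * x) ^ 3) := h1
      _ = K * t * ε * x ^ 3 * ε ^ 2 := by ring
  set B := β * t * x ^ 2 with hB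
  have hB0 : 0 ≤ B := by positivity
  -- exp bounds
  have key1 : Real.exp (-B) * Real.exp a ≤ Real.exp (-(B/2)) := by
    rw [← Real.exp_add]
    exact Real.exp_le_exp.mpr (by linarith)
  have key2 : Real.exp (-B) ≤ Real.exp (-(B/2)) :=
    Real.exp_le_exp.mpr (by linarith)
  have hE : Real.exp (-B) * max (Real.exp a) 1 ≤ Real.exp (-(B/2)) := by
    rcases max_cases (Real.exp a) 1 with ⟨h, _⟩ | ⟨h, _⟩
    · rw [h]; exact key1
    · rw [h, mul_one]; exact key2
  refine le_min ?_ ?_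
  · -- bound by 2
    have h1 : |Real.exp a - 1| ≤ Real.exp a + 1 := by
      have := (Real.exp_pos a).le
      rw [abs_le]; constructor <;> linarith
    calc Real.exp (-B) * |Real.exp a - 1|
        ≤ Real.exp (-B) * (Real.exp a + 1) :=
          mul_le_mul_of_nonneg_left h1 (Real.exp_pos _).le
      _ = Real.exp (-B) * Real.exp a + Real.exp (-B) := by ring
      _ ≤ Real.exp (-(B/2)) + Real.exp (-B) := by linarith
      _ ≤ 1 + 1 := by
          gcongr <;> [skip; skip] <;> exact Real.exp_le_one_iff.mpr (by linarith)
      _ = 2 := by norm_num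
  · -- main bound
    have step1 : Real.exp (-B) * |Real.exp a - 1| ≤ |a| * Real.exp (-(B/2)) := by
      calc Real.exp (-B) * |Real.exp a - 1|
          ≤ Real.exp (-B) * (|a| * max (Real.exp a) 1) :=
            mul_le_mul_of_nonneg_left (exp_sub_one_abs_le a) (Real.exp_pos _).le
        _ = |a| * (Real.exp (-B) * max (Real.exp a) 1) := by ring
        _ ≤ |a| * Real.exp (-(B/2)) :=
            mul_le_mul_of_nonneg_left hE (abs_nonneg a)
    have step2 : |a| * Real.exp (-(B/2)) ≤ K * t * ε * x ^ 3 * Real.exp (-(B/2)) :=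
      mul_le_mul_of_nonneg_right habs (Real.exp_pos _).le
    have step3 : K * t * ε * x ^ 3 * Real.exp (-(B/2)) ≤
        2 * K / (β * Real.exp 1) * ε * x := by
      have hv : (0:ℝ) ≤ B / 2 := by linarith
      have hkey := mul_exp_neg_le (B / 2) hv
      -- t * x^2 * exp (-(B/2)) ≤ 2/(β e)
      have h4 : t * x ^ 2 * Real.exp (-(B/2)) ≤ 2 / (β * Real.exp 1) := by
        have htx : t * x ^ 2 = (2 / β) * (B / 2) := by rw [hB]; field_simp
        calc t * x ^ 2 * Real.exp (-(B/2))
            = (2 / β) * (B / 2 * Real.exp (-(B/2))) := by rw [htx]; ring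
          _ ≤ (2 / β) * Real.exp (-1) :=
              mul_le_mul_of_nonneg_left hkey (by positivity)
          _ = 2 / (β * Real.exp 1) := by
              rw [Real.exp_neg]; field_simp
      calc K * t * ε * x ^ 3 * Real.exp (-(B/2))
          = (K * ε * x) * (t * x ^ 2 * Real.exp (-(B/2))) := by ring
        _ ≤ (K * ε * x) * (2 / (β * Real.exp 1)) := by
            apply mul_le_mul_of_nonneg_left h4 (by positivity)
        _ = 2 * K / (β * Real.exp 1) * ε * x := by ring
    linarith
end
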